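/- Let N ≥ 2, R ∈ ℝ, and a, b ∈ EuclideanSpace ℝ (Fin N). Then the map I(r) = (R²/‖r − a‖²)·(r − a) + b is differentiable at every r ≠ a, and its Fréchet derivative there is conformal with factor R²/‖r − a‖²: for every vector v, ‖(fderiv ℝ I r) v‖ = (R²/‖r − a‖²) · ‖v‖. -/

import Mathlib

/-!
The map is the inversion `EuclideanGeometry.inversion a R` followed by the translation by `b - a`.
The derivative of the inversion at `r ≠ a` is `(R / ‖r - a‖) ^ 2` times the reflection in the
hyperplane orthogonal to `r - a`, and a reflection is an isometry.
-/

open EuclideanGeometry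

section

variable {F : Type*} [NormedAddCommGroup F] [InnerProductSpace ℝ F]

theorem smul_sub_add_eq_inversion_add (R : ℝ) (a b : F) :
    (fun r => (R ^ 2 / ‖r - a‖ ^ 2) • (r - a) + b) = fun r => inversion a R r + (b - a) := by
  funext r
  simp only [inversion, dist_eq_norm, div_pow, vsub_eq_sub, vadd_eq_add]
  abel

theorem norm_smul_reflection_apply (K : Submodule ℝ F) [K.HasOrthogonalProjection] (s : ℝ)
    (v : F) : ‖(s • (K.reflection : F →L[ℝ] F)) v‖ = |s| * ‖v‖ := by
  rw [smul_apply, norm_smul, Real.norm_eq_abs]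
  exact congrArg _ (K.reflection.norm_map v)

end

theorem inversion_is_conformal
    {N : ℕ} (R : ℝ)
    (a b : EuclideanSpace ℝ (Fin N))
    (I : EuclideanSpace ℝ (Fin N) → EuclideanSpace ℝ (Fin N))
    (hI : I = fun r => (R ^ 2 / ‖r - a‖ ^ 2) • (r - a) + b) :
    ∀ r : EuclideanSpace ℝ (Fin N), r ≠ a →
      DifferentiableAt ℝ I r ∧
        ∀ v : EuclideanSpace ℝ (Fin N),
          ‖(fderiv ℝ I r) v‖ = (R ^ 2 / ‖r - a‖ ^ 2) * ‖v‖ := by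
  intro r hr
  rw [smul_sub_add_eq_inversion_add] at hI
  subst hI
  have hderiv := (hasFDerivAt_inversion (R := R) hr).add_const (b - a)
  refine ⟨hderiv.differentiableAt, fun v => ?_⟩
  rw [hderiv.fderiv, norm_smul_reflection_apply, abs_of_nonneg (by positivity), div_pow,
    dist_eq_norm]
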